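/- arXiv:1111.1982 — 2 statements merged into one kernel-verified Lean document; each statement's English description precedes it below -/
import Mathlib

section
/- Let X₀,…,X_{n-1} be i.i.d. random variables uniform on an M-ary PSK constellation, and let Y_i = E[CF_n(s) | X₀,…,X_{i-1}] for i = 0,…,n be the Doob martingale of the crest factor. Then almost surely |Y_i − Y_{i-1}| ≤ 2/√n for every i ∈ {1,…,n}. -/
open MeasureTheory Finset

noncomputable def ofdm (n : ℕ) (T : ℝ) (x : Fin n → ℂ) (t : ℝ) : ℂ :=
  ((Real.sqrt n : ℝ) : ℂ)⁻¹ *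
    ∑ i : Fin n, x i * Complex.exp (Complex.I * ((2 * Real.pi * (i : ℕ) * t / T : ℝ) : ℂ))

noncomputable def crest (n : ℕ) (T : ℝ) (x : Fin n → ℂ) : ℝ :=
  sSup ((fun t => ‖ofdm n T x t‖) '' Set.Icc (0 : ℝ) T)

/-- The uniform distribution on the M-ary PSK constellation. -/
noncomputable def pskMeasure (M : ℕ) : Measure ℂ :=
  (M : ENNReal)⁻¹ •
    ∑ l ∈ Finset.range M,
      Measure.dirac (Complex.exp (Complex.I * (((2 * l + 1) * Real.pi / M : ℝ) : ℂ)))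

/-!
Write `k = i - 1`, let `f` be the crest factor of the symbol vector and
`g = 𝔼[f | σ(X_j : j ≠ k)]`. As `X_k` is independent of the other symbols, `g(ω)` is the average
of `f` over the value of the `k`-th symbol, the others being frozen at their values at `ω`.
Changing one symbol of modulus at most one moves the OFDM signal by at most `2/√n` uniformly in
`t`, hence `|f - g| ≤ 2/√n`. The tower property together with the independence of `X_k` from
`σ(X_j : j ≠ k)` gives `Y_{i-1} = 𝔼[g | F_i]`, so `Y_i - Y_{i-1} = 𝔼[f - g | F_i]` obeys the
same bound.
-/

open ProbabilityTheory

section Freezing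

variable {Ω α β : Type*} [MeasurableSpace Ω] [MeasurableSpace α] [MeasurableSpace β]
  {μ : Measure Ω} [IsFiniteMeasure μ] {R : Ω → α} {W : Ω → β} {φ : α × β → ℝ}

theorem condExp_comp_prodMk_ae_eq_integral_of_indepFun [StandardBorelSpace β] [Nonempty β]
    (hR : Measurable R) (hW : Measurable W) (hRW : IndepFun R W μ) (hφ : StronglyMeasurable φ)
    (hφi : Integrable (fun ω => φ (R ω, W ω)) μ) :
    μ[fun ω => φ (R ω, W ω) | MeasurableSpace.comap R inferInstance] =ᵐ[μ]
      fun ω => ∫ c, φ (R ω, c) ∂(μ.map W) := by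
  have hκ : condDistrib W R μ =ᵐ[μ.map R] Kernel.const α (μ.map W) := by
    refine condDistrib_ae_eq_of_measure_eq_compProd R hW.aemeasurable ?_
    rw [Measure.compProd_const]
    exact (indepFun_iff_map_prod_eq_prod_map_map hR.aemeasurable hW.aemeasurable).1 hRW
  filter_upwards [condExp_prod_ae_eq_integral_condDistrib hR hW.aemeasurable hφ hφi,
    ae_of_ae_map hR.aemeasurable hκ] with ω hω hκω
  rw [hω, hκω, Kernel.const_apply]

theorem ae_integrable_comp_prodMk_of_indepFun (hR : Measurable R) (hW : Measurable W)
    (hRW : IndepFun R W μ) (hφ : StronglyMeasurable φ)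
    (hφi : Integrable (fun ω => φ (R ω, W ω)) μ) :
    ∀ᵐ ω ∂μ, Integrable (fun c => φ (R ω, c)) (μ.map W) := by
  have hprod : Integrable φ ((μ.map R).prod (μ.map W)) := by
    rw [← (indepFun_iff_map_prod_eq_prod_map_map hR.aemeasurable hW.aemeasurable).1 hRW,
      integrable_map_measure hφ.aestronglyMeasurable (hR.prodMk hW).aemeasurable]
    exact hφi
  exact ae_of_ae_map hR.aemeasurable hprod.prod_right_ae

end Freezing

theorem abs_sub_integral_le_of_ae {α : Type*} [MeasurableSpace α] {ν : Measure α}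
    [IsProbabilityMeasure ν] {h : α → ℝ} (hh : Integrable h ν) {a C : ℝ}
    (hC : ∀ᵐ c ∂ν, |a - h c| ≤ C) : |a - ∫ c, h c ∂ν| ≤ C := by
  have hmean : a - ∫ c, h c ∂ν = ∫ c, (a - h c) ∂ν := by
    rw [integral_sub (integrable_const a) hh, integral_const, probReal_univ, one_smul]
  rw [hmean]
  simpa using
    norm_integral_le_of_norm_le_const (hC.mono fun c hc => (Real.norm_eq_abs _).trans_le hc)

section IndepSup

theorem sup_eq_generateFrom_inter {Ω : Type*} (m₁ m₂ : MeasurableSpace Ω) :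
    m₁ ⊔ m₂ = MeasurableSpace.generateFrom
      (Set.image2 (· ∩ ·) {s | MeasurableSet[m₁] s} {s | MeasurableSet[m₂] s}) := by
  refine le_antisymm (sup_le (fun s hs => ?_) (fun s hs => ?_)) ?_
  · exact MeasurableSpace.measurableSet_generateFrom ⟨s, hs, Set.univ, .univ, Set.inter_univ s⟩
  · exact MeasurableSpace.measurableSet_generateFrom ⟨Set.univ, .univ, s, hs, Set.univ_inter s⟩
  · refine MeasurableSpace.generateFrom_le ?_
    rintro _ ⟨A, hA, B, hB, rfl⟩
    exact (le_sup_left (b := m₂) A hA).inter (le_sup_right (a := m₁) B hB)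

theorem isPiSystem_image2_inter {Ω : Type*} (m₁ m₂ : MeasurableSpace Ω) :
    IsPiSystem (Set.image2 (· ∩ ·) {s | MeasurableSet[m₁] s} {s | MeasurableSet[m₂] s}) := by
  rintro _ ⟨A₁, hA₁, B₁, hB₁, rfl⟩ _ ⟨A₂, hA₂, B₂, hB₂, rfl⟩ -
  exact ⟨A₁ ∩ A₂, hA₁.inter hA₂, B₁ ∩ B₂, hB₁.inter hB₂, Set.inter_inter_inter_comm _ _ _ _⟩

variable {Ω : Type*} {m₀ m₁ m₂ : MeasurableSpace Ω} [mΩ : MeasurableSpace Ω] {μ : Measure Ω}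

theorem setIntegral_eq_of_isPiSystem [IsFiniteMeasure μ] {m : MeasurableSpace Ω} (hm : m ≤ mΩ)
    {p : Set (Set Ω)} (h_eq : m = MeasurableSpace.generateFrom p) (hp : IsPiSystem p)
    {f g : Ω → ℝ} (hf : Integrable f μ) (hg : Integrable g μ)
    (h_univ : ∫ ω, f ω ∂μ = ∫ ω, g ω ∂μ) (h_basic : ∀ t ∈ p, ∫ ω in t, f ω ∂μ = ∫ ω in t, g ω ∂μ)
    {s : Set Ω} (hs : MeasurableSet[m] s) : ∫ ω in s, f ω ∂μ = ∫ ω in s, g ω ∂μ := by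
  induction s, hs using MeasurableSpace.induction_on_inter h_eq hp with
  | empty => simp
  | basic t ht => exact h_basic t ht
  | compl t ht iht =>
    have hf' := integral_add_compl (hm t ht) hf
    have hg' := integral_add_compl (hm t ht) hg
    linarith
  | iUnion t hd ht iht =>
    rw [integral_iUnion (fun j => hm _ (ht j)) hd hf.integrableOn,
      integral_iUnion (fun j => hm _ (ht j)) hd hg.integrableOn]
    exact tsum_congr iht

theorem setIntegral_inter_of_indep [IsFiniteMeasure μ] (h₀ : m₀ ≤ mΩ) (h₂ : m₂ ≤ mΩ)
    (hind : Indep m₀ m₂ μ) {h : Ω → ℝ} (hh : StronglyMeasurable[m₀] h) (hhi : Integrable h μ)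
    {A B : Set Ω} (hA : MeasurableSet[m₀] A) (hB : MeasurableSet[m₂] B) :
    ∫ ω in A ∩ B, h ω ∂μ = μ.real B * ∫ ω in A, h ω ∂μ := by
  calc ∫ ω in A ∩ B, h ω ∂μ = ∫ ω in B, A.indicator h ω ∂μ := by
        rw [setIntegral_indicator (h₀ A hA), Set.inter_comm]
    _ = ∫ ω in B, μ[A.indicator h | m₂] ω ∂μ :=
        (setIntegral_condExp h₂ (hhi.indicator (h₀ A hA)) hB).symm
    _ = ∫ ω in B, (∫ ω, A.indicator h ω ∂μ) ∂μ :=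
        setIntegral_congr_ae (h₂ B hB) ((condExp_indep_eq h₀ h₂ (hh.indicator hA) hind).mono
          fun _ hω _ => hω)
    _ = μ.real B * ∫ ω in A, h ω ∂μ := by
        rw [setIntegral_const, integral_indicator (h₀ A hA), smul_eq_mul]

theorem condExp_sup_ae_eq_of_indep [IsFiniteMeasure μ] (h₁₀ : m₁ ≤ m₀) (h₀ : m₀ ≤ mΩ)
    (h₂ : m₂ ≤ mΩ) (hind : Indep m₀ m₂ μ) {g : Ω → ℝ} (hg : StronglyMeasurable[m₀] g)
    (hgi : Integrable g μ) : μ[g | m₁ ⊔ m₂] =ᵐ[μ] μ[g | m₁] := by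
  have h₁ : m₁ ≤ mΩ := h₁₀.trans h₀
  refine (ae_eq_condExp_of_forall_setIntegral_eq (sup_le h₁ h₂) hgi
    (fun s _ _ => integrable_condExp.integrableOn) (fun s hs _ => ?_)
    (stronglyMeasurable_condExp.mono (le_sup_left : m₁ ≤ m₁ ⊔ m₂)).aestronglyMeasurable).symm
  refine setIntegral_eq_of_isPiSystem (sup_le h₁ h₂) (sup_eq_generateFrom_inter m₁ m₂)
    (isPiSystem_image2_inter m₁ m₂) integrable_condExp hgi (integral_condExp h₁) ?_ hs
  rintro _ ⟨A, hA, B, hB, rfl⟩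
  rw [setIntegral_inter_of_indep h₀ h₂ hind (stronglyMeasurable_condExp.mono h₁₀)
      integrable_condExp (h₁₀ A hA) hB,
    setIntegral_inter_of_indep h₀ h₂ hind hg hgi (h₁₀ A hA) hB, setIntegral_condExp h₁ hgi hA]

end IndepSup

section DoobBoundedDifferences

def insertCoord {ι β : Type*} [Fintype ι] [DecidableEq ι] (k : ι)
    (r : ((Finset.univ : Finset ι).erase k) → β) (c : β) : ι → β :=
  fun j => if h : j = k then c else r ⟨j, by simp [h]⟩

theorem insertCoord_eq_update {ι β : Type*} [Fintype ι] [DecidableEq ι] (k : ι) (x : ι → β)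
    (c : β) : insertCoord k (fun j => x j) c = Function.update x k c := by
  funext j
  by_cases h : j = k
  · subst h; simp [insertCoord]
  · simp [insertCoord, h]

theorem measurable_insertCoord {ι β : Type*} [Fintype ι] [DecidableEq ι] [MeasurableSpace β]
    (k : ι) : Measurable fun p : (((Finset.univ : Finset ι).erase k) → β) × β =>
      insertCoord k p.1 p.2 := by
  refine measurable_pi_lambda _ fun j => ?_
  by_cases h : j = k
  · simpa [insertCoord, h] using measurable_snd
  · simp only [insertCoord, h, dite_false]
    exact (measurable_pi_apply _).comp measurable_fst

variable {Ω β : Type*} [MeasurableSpace β] {n : ℕ}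

abbrev prefixSigma (X : Fin n → Ω → β) (m : ℕ) : MeasurableSpace Ω :=
  ⨆ j : Fin n, ⨆ _ : (j : ℕ) < m, MeasurableSpace.comap (X j) inferInstance

theorem prefixSigma_succ (X : Fin n → Ω → β) (k : Fin n) :
    prefixSigma X (k + 1) = prefixSigma X k ⊔ MeasurableSpace.comap (X k) inferInstance := by
  refine le_antisymm (iSup_le fun j => iSup_le fun hj => ?_) (sup_le ?_ ?_)
  · rcases (Nat.lt_succ_iff_lt_or_eq.1 hj) with hj | hj
    · exact le_sup_of_le_left (le_iSup₂_of_le j hj le_rfl)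
    · rw [Fin.ext hj]
      exact le_sup_right
  · exact iSup₂_mono' fun j hj => ⟨j, hj.trans (Nat.lt_succ_self _), le_rfl⟩
  · exact le_iSup₂_of_le k (Nat.lt_succ_self _) le_rfl

theorem prefixSigma_le_comap_erase (X : Fin n → Ω → β) (k : Fin n) :
    prefixSigma X k ≤ MeasurableSpace.comap
      (fun ω (j : ((Finset.univ : Finset (Fin n)).erase k)) => X j ω) inferInstance := by
  refine iSup₂_le fun j hj => ?_
  have hjk : j ∈ (Finset.univ : Finset (Fin n)).erase k :=
    Finset.mem_erase.2 ⟨fun h => (h ▸ hj).false, Finset.mem_univ j⟩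
  have hj : Measurable fun r : ((Finset.univ : Finset (Fin n)).erase k) → β => r ⟨j, hjk⟩ :=
    measurable_pi_apply _
  exact Measurable.comap_le (hj.comp (comap_measurable _))

variable [MeasurableSpace Ω] {μ : Measure Ω}

theorem ae_abs_condExp_prefixSigma_succ_sub_le [IsProbabilityMeasure μ] [StandardBorelSpace β]
    [Nonempty β] {X : Fin n → Ω → β} (hX : ∀ j, Measurable (X j)) (hind : iIndepFun X μ)
    {f : (Fin n → β) → ℝ} (hf : Measurable f) (hfi : Integrable (fun ω => f (X · ω)) μ)
    (k : Fin n) {s : Set β} (hs : ∀ᵐ c ∂(μ.map (X k)), c ∈ s) {C : ℝ}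
    (hfC : ∀ x c, x k ∈ s → c ∈ s → |f x - f (Function.update x k c)| ≤ C) :
    ∀ᵐ ω ∂μ, |μ[fun ω => f (X · ω) | prefixSigma X (k + 1)] ω
      - μ[fun ω => f (X · ω) | prefixSigma X k] ω| ≤ C := by
  set R : Ω → ((Finset.univ : Finset (Fin n)).erase k) → β := fun ω j => X j ω
  set φ : (((Finset.univ : Finset (Fin n)).erase k) → β) × β → ℝ :=
    fun p => f (insertCoord k p.1 p.2)
  set g := μ[fun ω => f (X · ω) | MeasurableSpace.comap R inferInstance]
  have hR : Measurable R := measurable_pi_lambda _ fun j => hX j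
  have hRX : IndepFun R (X k) μ :=
    (hind.indepFun_finset _ {k} (Finset.disjoint_singleton_right.2 (Finset.notMem_erase k _))
      hX).comp measurable_id (measurable_pi_apply ⟨k, Finset.mem_singleton_self k⟩)
  have hφ : Measurable φ := hf.comp (measurable_insertCoord k)
  have hfφ : (fun ω => f (X · ω)) = fun ω => φ (R ω, X k ω) := by
    funext ω
    exact congrArg f
      ((insertCoord_eq_update k (X · ω) (X k ω)).trans (Function.update_eq_self _ _)).symm
  have hφi : Integrable (fun ω => φ (R ω, X k ω)) μ := hfφ ▸ hfi
  have hfreeze : g =ᵐ[μ] fun ω => ∫ c, φ (R ω, c) ∂(μ.map (X k)) := by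
    rw [show g = μ[fun ω => φ (R ω, X k ω) | _] by rw [← hfφ]]
    exact condExp_comp_prodMk_ae_eq_integral_of_indepFun hR (hX k) hRX hφ.stronglyMeasurable hφi
  have hle := prefixSigma_le_comap_erase X k
  have : IsProbabilityMeasure (μ.map (X k)) := Measure.isProbabilityMeasure_map (hX k).aemeasurable
  have hgF : μ[fun ω => f (X · ω) | prefixSigma X k] =ᵐ[μ] μ[g | prefixSigma X (k + 1)] := by
    rw [prefixSigma_succ]
    exact (condExp_condExp_of_le hle hR.comap_le).symm.trans
      (condExp_sup_ae_eq_of_indep hle hR.comap_le (hX k).comap_le hRX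
        stronglyMeasurable_condExp integrable_condExp).symm
  have hfg : ∀ᵐ ω ∂μ, |f (X · ω) - g ω| ≤ C := by
    filter_upwards [hfreeze,
      ae_integrable_comp_prodMk_of_indepFun hR (hX k) hRX hφ.stronglyMeasurable hφi,
      ae_of_ae_map (hX k).aemeasurable hs] with ω hgω hint hXω
    rw [hgω]
    refine abs_sub_integral_le_of_ae hint (hs.mono fun c hc => ?_)
    have hupd : insertCoord k (fun j => X j ω) c = Function.update (X · ω) k c :=
      insertCoord_eq_update k (X · ω) c
    simpa only [φ, R, hupd] using hfC (X · ω) c hXω hc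
  filter_upwards [ae_bdd_abs_condExp_of_ae_bdd_abs (m := prefixSigma X (k + 1)) hfg,
    condExp_sub hfi integrable_condExp (prefixSigma X (k + 1)), hgF] with ω hω hsub hgω
  rw [hgω, ← Pi.sub_apply, ← hsub]
  exact hω

end DoobBoundedDifferences

section Crest

variable {n : ℕ} {T : ℝ}

theorem norm_ofdm_le (x : Fin n → ℂ) (t : ℝ) :
    ‖ofdm n T x t‖ ≤ (√n)⁻¹ * ∑ i, ‖x i‖ := by
  rw [ofdm, norm_mul, norm_inv, Complex.norm_real, Real.norm_of_nonneg (Real.sqrt_nonneg _)]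
  gcongr
  refine (norm_sum_le _ _).trans (Finset.sum_le_sum fun i _ => ?_)
  rw [norm_mul, Complex.norm_exp_I_mul_ofReal, mul_one]

theorem ofdm_sub (x y : Fin n → ℂ) (t : ℝ) :
    ofdm n T x t - ofdm n T y t = ofdm n T (x - y) t := by
  simp only [ofdm, ← mul_sub, ← Finset.sum_sub_distrib, ← sub_mul, Pi.sub_apply]

theorem bddAbove_norm_ofdm (x : Fin n → ℂ) :
    BddAbove ((fun t => ‖ofdm n T x t‖) '' Set.Icc 0 T) :=
  ⟨(√n)⁻¹ * ∑ i, ‖x i‖, by rintro _ ⟨t, -, rfl⟩; exact norm_ofdm_le x t⟩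

theorem crest_le_crest_add (x y : Fin n → ℂ) :
    crest n T x ≤ crest n T y + (√n)⁻¹ * ∑ i, ‖x i - y i‖ := by
  rcases (Set.Icc (0 : ℝ) T).eq_empty_or_nonempty with hT | hT
  · simp only [crest, hT, Set.image_empty, Real.sSup_empty, zero_add]
    positivity
  refine csSup_le (hT.image _) ?_
  rintro _ ⟨t, ht, rfl⟩
  calc ‖ofdm n T x t‖ ≤ ‖ofdm n T y t‖ + ‖ofdm n T x t - ofdm n T y t‖ :=
        norm_le_norm_add_norm_sub' _ _
    _ ≤ crest n T y + (√n)⁻¹ * ∑ i, ‖x i - y i‖ := by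
        rw [ofdm_sub]
        exact add_le_add (le_csSup (bddAbove_norm_ofdm y) ⟨t, ht, rfl⟩) (norm_ofdm_le _ t)

theorem abs_crest_sub_crest_le (x y : Fin n → ℂ) :
    |crest n T x - crest n T y| ≤ (√n)⁻¹ * ∑ i, ‖x i - y i‖ := by
  have hyx := crest_le_crest_add (T := T) y x
  simp_rw [norm_sub_rev (y _)] at hyx
  rw [abs_sub_le_iff]
  constructor <;> linarith [crest_le_crest_add (T := T) x y]

theorem crest_zero : crest n T 0 = 0 := by
  have hzero : (fun t => ‖ofdm n T 0 t‖) = fun _ => 0 := by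
    funext t
    simp [ofdm]
  rw [crest, hzero]
  exact le_antisymm (Real.sSup_nonpos fun _ ⟨_, _, h⟩ => h.symm.le)
    (Real.sSup_nonneg fun _ ⟨_, _, h⟩ => h.symm.ge)

theorem continuous_crest : Continuous (crest n T) := by
  refine (LipschitzWith.of_le_add_mul' ((√n)⁻¹ * n) fun x y => ?_).continuous
  refine (crest_le_crest_add x y).trans ?_
  rw [mul_assoc]
  gcongr
  calc ∑ i, ‖x i - y i‖ ≤ ∑ _i : Fin n, dist x y :=
        Finset.sum_le_sum fun i _ => dist_eq_norm (x i) (y i) ▸ dist_le_pi_dist x y i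
    _ = n * dist x y := by simp

theorem abs_crest_sub_crest_update_le (x : Fin n → ℂ) (k : Fin n) {c : ℂ} (hx : ‖x k‖ ≤ 1)
    (hc : ‖c‖ ≤ 1) : |crest n T x - crest n T (Function.update x k c)| ≤ 2 / √n := by
  have hsum : ∑ i, ‖x i - Function.update x k c i‖ = ‖x k - c‖ := by
    rw [Finset.sum_eq_single k (fun j _ hj => by simp [hj]) (by simp), Function.update_self]
  calc _ ≤ (√n)⁻¹ * ∑ i, ‖x i - Function.update x k c i‖ := abs_crest_sub_crest_le _ _
    _ ≤ (√n)⁻¹ * 2 := by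
        rw [hsum]
        gcongr
        linarith [norm_sub_le (x k) c]
    _ = 2 / √n := by ring

theorem integrable_crest {Ω : Type*} [MeasurableSpace Ω] {μ : Measure Ω} [IsFiniteMeasure μ]
    {X : Fin n → Ω → ℂ} (hX : ∀ j, Measurable (X j)) (hb : ∀ j, ∀ᵐ ω ∂μ, ‖X j ω‖ ≤ 1) :
    Integrable (fun ω => crest n T (X · ω)) μ := by
  have hm : Measurable fun ω => crest n T (X · ω) :=
    continuous_crest.measurable.comp (measurable_pi_lambda _ hX)
  refine .of_bound hm.aestronglyMeasurable ((√n)⁻¹ * n) ?_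
  filter_upwards [ae_all_iff.2 hb] with ω hω
  have h := abs_crest_sub_crest_le (T := T) (X · ω) 0
  rw [crest_zero, sub_zero, ← Real.norm_eq_abs] at h
  refine h.trans ?_
  gcongr
  calc ∑ i, ‖X i ω - 0‖ ≤ ∑ _i : Fin n, (1 : ℝ) :=
        Finset.sum_le_sum fun i _ => by simpa using hω i
    _ = n := by simp

end Crest

theorem ae_norm_eq_one_pskMeasure (M : ℕ) : ∀ᵐ c ∂pskMeasure M, ‖c‖ = 1 := by
  have hpoint (l : ℕ) :
      ‖Complex.exp (Complex.I * (((2 * l + 1) * Real.pi / M : ℝ) : ℂ))‖ = 1 :=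
    Complex.norm_exp_I_mul_ofReal _
  rw [ae_iff, pskMeasure, Measure.smul_apply, Measure.coe_finsetSum, Finset.sum_apply,
    Finset.sum_eq_zero fun l _ => by
      rw [Measure.dirac_apply, Set.indicator_of_notMem (not_not_intro (hpoint l))], smul_zero]

theorem stmt_3_general {Ω : Type*} [MeasurableSpace Ω] (μ : Measure Ω) [IsProbabilityMeasure μ]
    (n M : ℕ) (T : ℝ)
    (X : Fin n → Ω → ℂ) (hmeas : ∀ j, Measurable (X j))
    (hiid : ProbabilityTheory.iIndepFun X μ)
    (hdist : ∀ j, Measure.map (X j) μ = pskMeasure M)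
    (F : ℕ → MeasurableSpace Ω)
    (hF : ∀ i, F i = ⨆ j : Fin n, ⨆ _ : (j : ℕ) < i, MeasurableSpace.comap (X j) inferInstance)
    (Y : ℕ → Ω → ℝ)
    (hY : ∀ i, Y i = μ[(fun ω => crest n T (fun j => X j ω)) | F i]) :
    ∀ i, 1 ≤ i → i ≤ n →
      ∀ᵐ ω ∂μ, |Y i ω - Y (i - 1) ω| ≤ 2 / Real.sqrt n := by
  intro i hi hin
  obtain ⟨k, rfl⟩ : ∃ k : Fin n, i = k + 1 := ⟨⟨i - 1, by omega⟩, by simp; omega⟩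
  have hball : ∀ j, ∀ᵐ c ∂(μ.map (X j)), c ∈ {c : ℂ | ‖c‖ ≤ 1} := fun j =>
    hdist j ▸ (ae_norm_eq_one_pskMeasure M).mono fun c hc => hc.le
  rw [hY, hY, Nat.add_sub_cancel, hF, hF]
  exact ae_abs_condExp_prefixSigma_succ_sub_le hmeas hiid continuous_crest.measurable
    (integrable_crest hmeas fun j => ae_of_ae_map (hmeas j).aemeasurable (hball j)) k (hball k)
    fun x c hx hc => abs_crest_sub_crest_update_le x k hx hc

theorem stmt_3 {Ω : Type*} [MeasurableSpace Ω] (μ : Measure Ω) [IsProbabilityMeasure μ]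
    (n M : ℕ) (hn : 0 < n) (hM : 2 ≤ M) (T : ℝ) (hT : 0 < T)
    (X : Fin n → Ω → ℂ) (hmeas : ∀ j, Measurable (X j))
    (hiid : ProbabilityTheory.iIndepFun X μ)
    (hdist : ∀ j, Measure.map (X j) μ = pskMeasure M)
    (F : ℕ → MeasurableSpace Ω)
    (hF : ∀ i, F i = ⨆ j : Fin n, ⨆ _ : (j : ℕ) < i, MeasurableSpace.comap (X j) inferInstance)
    (Y : ℕ → Ω → ℝ)
    (hY : ∀ i, Y i = μ[(fun ω => crest n T (fun j => X j ω)) | F i]) :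
    ∀ i, 1 ≤ i → i ≤ n →
      ∀ᵐ ω ∂μ, |Y i ω - Y (i - 1) ω| ≤ 2 / Real.sqrt n :=
  stmt_3_general μ n M T X hmeas hiid hdist F hF Y hY
end

section
/- Let {X_k, F_k}_{k=0}^n be a real-valued martingale such that |X_k − X_{k-1}| ≤ d and E[(X_k − X_{k-1})² | F_{k-1}] ≤ σ² almost surely for all k ∈ {1,…,n}, where d, σ > 0. Let γ = σ²/d² and δ = α/d for α ≥ 0 with δ ≤ 1. Then P(|X_n − X_0| ≥ αn) ≤ 2 exp(−n · D((δ+γ)/(1+γ) ‖ γ/(1+γ))), where D(p‖q) = p ln(p/q) + (1−p) ln((1−p)/(1−q)). -/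
/-!
Bennett's argument. Since `(exp z - 1 - z) / z ^ 2` is nondecreasing, on `(-∞, d]` the function
`y ↦ exp (t * y)` lies below the parabola tangent to it at `y = -σ² / d` and meeting it at `y = d`.
Integrating this parabola against the conditional law of an increment (mean `0`, second moment
at most `σ²`) bounds its conditional moment generating function by that of the two-point law on
`{d, -σ² / d}`. The tower property multiplies these bounds over the `n` steps, Markov's inequality
turns the product into a tail bound, and optimising the exponential parameter gives
`exp (-n D(p‖q))`; when `α = d` the infimum is only reached as the parameter tends to infinity.
The lower tail is the upper tail of `-X`.
-/

open MeasureTheory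

/-- Binary Kullback–Leibler divergence between `(p, 1-p)` and `(q, 1-q)`. -/
noncomputable def binaryKL (p q : ℝ) : ℝ :=
  p * Real.log (p / q) + (1 - p) * Real.log ((1 - p) / (1 - q))

open Real Filter Topology ProbabilityTheory

theorem exp_sub_one_sub_eq_sq_mul_integral (s : ℝ) :
    exp s - 1 - s = s ^ 2 * ∫ u in (0 : ℝ)..1, (1 - u) * exp (s * u) := by
  rcases eq_or_ne s 0 with rfl | hs
  · simp
  have hderiv : ∀ u ∈ Set.uIcc (0 : ℝ) 1,
      HasDerivAt (fun u ↦ ((1 - u) / s + 1 / s ^ 2) * exp (s * u)) ((1 - u) * exp (s * u)) u := by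
    intro u _
    have h1 := (((hasDerivAt_id u).const_sub 1).div_const s).add_const (1 / s ^ 2)
    have h2 := ((hasDerivAt_id u).const_mul s).exp
    refine (h1.mul h2).congr_deriv ?_
    simp only [id]
    field_simp
    ring
  rw [intervalIntegral.integral_eq_sub_of_hasDerivAt hderiv
    (Continuous.intervalIntegrable (by fun_prop) _ _)]
  field_simp
  simp only [sub_self, mul_zero, zero_add, mul_one, sub_zero, exp_zero]
  ring

theorem sq_mul_exp_sub_one_sub_le {z w : ℝ} (h : z ≤ w) :
    w ^ 2 * (exp z - 1 - z) ≤ z ^ 2 * (exp w - 1 - w) := by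
  rw [exp_sub_one_sub_eq_sq_mul_integral z, exp_sub_one_sub_eq_sq_mul_integral w,
    mul_left_comm]
  gcongr
  apply intervalIntegral.integral_mono_on zero_le_one
    (Continuous.intervalIntegrable (by fun_prop) _ _)
    (Continuous.intervalIntegrable (by fun_prop) _ _)
  intro u hu
  have h1u : 0 ≤ 1 - u := by linarith [hu.2]
  gcongr
  exact hu.1

theorem exp_le_one_add_add_mul_sq {z w : ℝ} (hzw : z ≤ w) (hw : 0 < w) :
    exp z ≤ 1 + z + (exp w - 1 - w) / w ^ 2 * z ^ 2 := by
  have h := sq_mul_exp_sub_one_sub_le hzw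
  rw [div_mul_eq_mul_div, ← sub_le_iff_le_add', le_div_iff₀ (by positivity)]
  linarith

/-- The parabola tangent to `y ↦ exp (t * y)` at `y = -a` and meeting it at `y = d`. -/
theorem exp_mul_le_quadratic {t a d y : ℝ} (ht : 0 ≤ t) (hda : 0 < d + a) (hy : y ≤ d) :
    exp (t * y) ≤ exp (-(t * a)) * (1 + t * (y + a) +
      (exp (t * (d + a)) - 1 - t * (d + a)) / (d + a) ^ 2 * (y + a) ^ 2) := by
  rcases ht.eq_or_lt with rfl | ht
  · simp
  have hquad := exp_le_one_add_add_mul_sq (z := t * (y + a)) (w := t * (d + a))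
    (by gcongr) (by positivity)
  calc exp (t * y) = exp (-(t * a)) * exp (t * (y + a)) := by rw [← exp_add]; ring_nf
    _ ≤ exp (-(t * a)) * (1 + t * (y + a) +
          (exp (t * (d + a)) - 1 - t * (d + a)) / (t * (d + a)) ^ 2 * (t * (y + a)) ^ 2) := by
        gcongr
    _ = _ := by field_simp

/-- The moment generating function at `s` of the centred two-point law with mass `γ / (1 + γ)`
at `1` and mass `1 / (1 + γ)` at `-γ`. -/
noncomputable def bennettBound (γ s : ℝ) : ℝ := (γ * exp s + exp (-(γ * s))) / (1 + γ)

theorem exists_exp_neg_mul_mul_bennettBound_eq {γ δ : ℝ} (hγ : 0 < γ) (hδ0 : 0 ≤ δ)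
    (hδ1 : δ < 1) :
    ∃ s, 0 ≤ s ∧ exp (-(δ * s)) * bennettBound γ s =
      exp (-binaryKL ((δ + γ) / (1 + γ)) (γ / (1 + γ))) := by
  have h1δ : 0 < 1 - δ := by linarith
  set E := (δ + γ) / (γ * (1 - δ))
  have hE : 1 ≤ E := by rw [le_div_iff₀ (by positivity)]; nlinarith
  -- the minimiser `s` of the Chernoff exponent solves `exp ((1 + γ) * s) = E`
  set s := log E / (1 + γ)
  have hsE : log E = (1 + γ) * s := by simp only [s]; field_simp
  have hs : exp s = exp (-(γ * s)) * E := by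
    rw [← exp_log (by positivity : 0 < E), ← exp_add, hsE]
    congr 1
    ring
  have hlogE : log E = log ((δ + γ) / γ) - log (1 - δ) := by
    rw [← log_div (by positivity) h1δ.ne', div_div]
  refine ⟨s, div_nonneg (log_nonneg hE) (by positivity), ?_⟩
  calc exp (-(δ * s)) * bennettBound γ s = exp (-((δ + γ) * s)) / (1 - δ) := by
        rw [bennettBound, hs, show -((δ + γ) * s) = -(δ * s) + -(γ * s) by ring, exp_add]
        simp only [E]
        field_simp
        ring
    _ = exp (-((δ + γ) * s) - log (1 - δ)) := by rw [exp_sub, exp_log h1δ]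
    _ = exp (-binaryKL ((δ + γ) / (1 + γ)) (γ / (1 + γ))) := by
        have hp : (δ + γ) / (1 + γ) / (γ / (1 + γ)) = (δ + γ) / γ := by field_simp
        have hq : (1 - (δ + γ) / (1 + γ)) / (1 - γ / (1 + γ)) = 1 - δ := by field_simp; ring
        rw [binaryKL, hp, hq, show (δ + γ) * s = (δ + γ) / (1 + γ) * log E by ring, hlogE]
        ring_nf

theorem tendsto_exp_neg_mul_bennettBound {γ : ℝ} (hγ : 0 < γ) :
    Tendsto (fun s ↦ exp (-s) * bennettBound γ s) atTop
      (𝓝 (exp (-binaryKL ((1 + γ) / (1 + γ)) (γ / (1 + γ))))) := by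
  have hKL : exp (-binaryKL ((1 + γ) / (1 + γ)) (γ / (1 + γ))) = (γ + 0) / (1 + γ) := by
    rw [div_self (by positivity), binaryKL, sub_self, zero_mul, add_zero, one_mul, one_div,
      log_inv, neg_neg, exp_log (by positivity), add_zero]
  have hform : ∀ s, exp (-s) * bennettBound γ s = (γ + exp (-((1 + γ) * s))) / (1 + γ) := by
    intro s
    rw [bennettBound, mul_div_assoc', mul_add, mul_left_comm, ← exp_add, neg_add_cancel, exp_zero,
      ← exp_add]
    ring_nf
  simp only [hform, hKL]
  refine ((tendsto_const_nhds.add ?_).div_const _)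
  exact tendsto_exp_neg_atTop_nhds_zero.comp (tendsto_id.const_mul_atTop (by positivity))

theorem le_exp_neg_mul_binaryKL_of_forall_le {γ δ c : ℝ} (n : ℕ) (hγ : 0 < γ) (hδ0 : 0 ≤ δ)
    (hδ1 : δ ≤ 1) (hc : ∀ s, 0 ≤ s → c ≤ (exp (-(δ * s)) * bennettBound γ s) ^ n) :
    c ≤ exp (-n * binaryKL ((δ + γ) / (1 + γ)) (γ / (1 + γ))) := by
  rw [neg_mul, ← mul_neg, exp_nat_mul]
  rcases hδ1.lt_or_eq with hδ1 | rfl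
  · obtain ⟨s, hs, hopt⟩ := exists_exp_neg_mul_mul_bennettBound_eq hγ hδ0 hδ1
    exact hopt ▸ hc s hs
  · refine ge_of_tendsto ((tendsto_exp_neg_mul_bennettBound hγ).pow n) ?_
    filter_upwards [eventually_ge_atTop 0] with s hs
    simpa using hc s hs

section CondExp

variable {Ω : Type*} {m m0 : MeasurableSpace Ω} {μ : Measure Ω} [IsFiniteMeasure μ]

theorem ae_condExp_le_of_le_quadratic (hm : m ≤ m0) {Y Z : Ω → ℝ} {A B C σ : ℝ} (hC : 0 ≤ C)
    (hY : Integrable Y μ) (hY2 : Integrable (fun ω ↦ Y ω ^ 2) μ) (hZ : Integrable Z μ)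
    (hZY : ∀ᵐ ω ∂μ, Z ω ≤ A + B * Y ω + C * Y ω ^ 2)
    (hY0 : μ[Y|m] =ᵐ[μ] 0) (hvar : ∀ᵐ ω ∂μ, μ[fun ω ↦ Y ω ^ 2|m] ω ≤ σ ^ 2) :
    ∀ᵐ ω ∂μ, μ[Z|m] ω ≤ A + C * σ ^ 2 := by
  have hquad : Integrable (fun ω ↦ A + B * Y ω + C * Y ω ^ 2) μ :=
    ((integrable_const A).add (hY.const_mul B)).add (hY2.const_mul C)
  have hlin : μ[fun ω ↦ A + B * Y ω + C * Y ω ^ 2|m] =ᵐ[μ]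
      (fun _ ↦ A) + B • μ[Y|m] + C • μ[fun ω ↦ Y ω ^ 2|m] := by
    change μ[(fun _ ↦ A) + B • Y + C • fun ω ↦ Y ω ^ 2|m] =ᵐ[μ] _
    filter_upwards [condExp_add ((integrable_const A).add (hY.smul B)) (hY2.smul C) m,
      condExp_add (integrable_const A) (hY.smul B) m, condExp_smul B Y m,
      condExp_smul C (fun ω ↦ Y ω ^ 2) m] with ω h1 h2 h3 h4
    simp only [Pi.add_apply] at h1 h2 ⊢
    rw [h1, h2, h3, h4, condExp_const hm]
  have hmono := condExp_mono (m := m) hZ hquad hZY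
  filter_upwards [hmono, hlin, hY0, hvar] with ω hmono hlin hY0 hvar
  rw [hlin] at hmono
  simp only [Pi.add_apply, Pi.smul_apply, smul_eq_mul, hY0, Pi.zero_apply] at hmono
  nlinarith

theorem ae_condExp_exp_mul_le_bennettBound (hm : m ≤ m0) {Y : Ω → ℝ}
    (hYm : AEStronglyMeasurable Y μ) {t d σ : ℝ} (ht : 0 ≤ t) (hd : 0 < d)
    (hYd : ∀ᵐ ω ∂μ, |Y ω| ≤ d) (hY0 : μ[Y|m] =ᵐ[μ] 0)
    (hvar : ∀ᵐ ω ∂μ, μ[fun ω ↦ Y ω ^ 2|m] ω ≤ σ ^ 2) :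
    ∀ᵐ ω ∂μ, μ[fun ω ↦ exp (t * Y ω)|m] ω ≤ bennettBound (σ ^ 2 / d ^ 2) (t * d) := by
  set a := σ ^ 2 / d
  have hda : 0 < d + a := by positivity
  set K := exp (t * (d + a)) - 1 - t * (d + a)
  have hK : 0 ≤ K := by linarith [add_one_le_exp (t * (d + a))]
  set C := exp (-(t * a)) * K / (d + a) ^ 2
  have hY : Integrable Y μ := .of_bound hYm d (by simpa using hYd)
  have hY2 : Integrable (fun ω ↦ Y ω ^ 2) μ := .of_bound (hYm.pow 2) (d ^ 2) <| by
    filter_upwards [hYd] with ω h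
    simpa [abs_pow] using pow_le_pow_left₀ (abs_nonneg _) h 2
  have hexp : Integrable (fun ω ↦ exp (t * Y ω)) μ :=
    integrable_exp_mul_of_le t d ht hYm.aemeasurable (hYd.mono fun ω ↦ le_of_abs_le)
  have hquad : ∀ᵐ ω ∂μ, exp (t * Y ω) ≤ (exp (-(t * a)) * (1 + t * a) + C * a ^ 2) +
      (exp (-(t * a)) * t + 2 * C * a) * Y ω + C * Y ω ^ 2 := by
    filter_upwards [hYd] with ω h
    refine (exp_mul_le_quadratic ht hda (le_of_abs_le h)).trans_eq ?_
    ring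
  refine (ae_condExp_le_of_le_quadratic hm (by positivity) hY hY2 hexp hquad hY0 hvar).mono
    fun ω h ↦ h.trans_eq ?_
  have hγ : σ ^ 2 / d ^ 2 * (t * d) = t * a := by simp only [a]; field_simp
  simp only [bennettBound, C, K, hγ]
  rw [show t * (d + a) = t * d + t * a by ring, exp_add, exp_neg]
  simp only [a]
  field_simp
  ring

end CondExp

section Martingale

variable {Ω : Type*} {m0 : MeasurableSpace Ω} {μ : Measure Ω} {ℱ : Filtration ℕ m0}
  {X : ℕ → Ω → ℝ} {n : ℕ} {t d : ℝ}

theorem ae_sub_zero_le_of_succ_sub_le (hbdd : ∀ k < n, ∀ᵐ ω ∂μ, X (k + 1) ω - X k ω ≤ d) :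
    ∀ k ≤ n, ∀ᵐ ω ∂μ, X k ω - X 0 ω ≤ k * d := by
  intro k hk
  induction k with
  | zero => simp
  | succ k ih =>
    filter_upwards [hbdd k hk, ih (by omega)] with ω hstep hprev
    push_cast
    linarith

theorem integrable_exp_mul_sub_zero [IsFiniteMeasure μ] (hX : StronglyAdapted ℱ X) (ht : 0 ≤ t)
    (hbdd : ∀ k < n, ∀ᵐ ω ∂μ, X (k + 1) ω - X k ω ≤ d) {k : ℕ} (hk : k ≤ n) :
    Integrable (fun ω ↦ exp (t * (X k ω - X 0 ω))) μ :=
  integrable_exp_mul_of_le t (k * d) ht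
    (((hX k).mono (ℱ.le k)).sub ((hX 0).mono (ℱ.le 0))).measurable.aemeasurable
    (ae_sub_zero_le_of_succ_sub_le hbdd k hk)

theorem integral_exp_mul_sub_zero_le_pow [IsProbabilityMeasure μ] (hX : StronglyAdapted ℱ X)
    (ht : 0 ≤ t) {M : ℝ} (hM : 0 ≤ M) (hbdd : ∀ k < n, ∀ᵐ ω ∂μ, X (k + 1) ω - X k ω ≤ d)
    (hmgf : ∀ k < n, ∀ᵐ ω ∂μ, μ[fun ω ↦ exp (t * (X (k + 1) ω - X k ω))|ℱ k] ω ≤ M) :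
    ∫ ω, exp (t * (X n ω - X 0 ω)) ∂μ ≤ M ^ n := by
  suffices ∀ k ≤ n, ∫ ω, exp (t * (X k ω - X 0 ω)) ∂μ ≤ M ^ k from this n le_rfl
  have hXm : ∀ k, StronglyMeasurable[m0] (X k) := fun k ↦ (hX k).mono (ℱ.le k)
  intro k hk
  induction k with
  | zero => simp
  | succ k ih =>
    set f := fun ω ↦ exp (t * (X k ω - X 0 ω))
    set g := fun ω ↦ exp (t * (X (k + 1) ω - X k ω))
    have hfg : (fun ω ↦ exp (t * (X (k + 1) ω - X 0 ω))) = f * g := by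
      ext ω
      simp only [f, g, Pi.mul_apply, ← exp_add]
      ring_nf
    have hf : StronglyMeasurable[ℱ k] f := continuous_exp.comp_stronglyMeasurable
      (((hX k).sub ((hX 0).mono (ℱ.mono k.zero_le))).const_mul t)
    have hg : Integrable g μ := integrable_exp_mul_of_le t d ht
      ((hXm (k + 1)).sub (hXm k)).measurable.aemeasurable
      (hbdd k hk)
    have hpull := condExp_mul_of_stronglyMeasurable_left hf
      (hfg ▸ integrable_exp_mul_sub_zero hX ht hbdd hk) hg
    calc ∫ ω, exp (t * (X (k + 1) ω - X 0 ω)) ∂μ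
        = ∫ ω, (μ[f * g|ℱ k]) ω ∂μ := by rw [hfg, integral_condExp (ℱ.le k)]
      _ ≤ ∫ ω, f ω * M ∂μ := by
          refine integral_mono_ae integrable_condExp
            ((integrable_exp_mul_sub_zero hX ht hbdd (by omega)).mul_const M) ?_
          filter_upwards [hpull, hmgf k hk] with ω hpull hgM
          rw [hpull]
          exact mul_le_mul_of_nonneg_left hgM (exp_pos _).le
      _ = (∫ ω, f ω ∂μ) * M := integral_mul_const M f
      _ ≤ M ^ k * M := by gcongr; exact ih (by omega)
      _ = M ^ (k + 1) := (pow_succ M k).symm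

namespace MeasureTheory.Martingale

theorem condExp_succ_sub_ae_eq_zero [IsFiniteMeasure μ] (hX : Martingale X ℱ μ)
    (k : ℕ) : μ[X (k + 1) - X k|ℱ k] =ᵐ[μ] 0 := by
  filter_upwards [condExp_sub (hX.integrable (k + 1)) (hX.integrable k) (ℱ k),
    hX.condExp_ae_eq k.le_succ] with ω hsub hsucc
  rw [hsub, Pi.sub_apply, hsucc, condExp_of_stronglyMeasurable (ℱ.le k) (hX.stronglyAdapted k)
    (hX.integrable k), Pi.zero_apply, sub_self]

variable [IsProbabilityMeasure μ] {σ : ℝ}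

theorem integral_exp_mul_sub_zero_le_bennettBound_pow (hX : Martingale X ℱ μ)
    (ht : 0 ≤ t) (hd : 0 < d) (hbdd : ∀ k < n, ∀ᵐ ω ∂μ, |X (k + 1) ω - X k ω| ≤ d)
    (hvar : ∀ k < n, ∀ᵐ ω ∂μ, μ[fun ω ↦ (X (k + 1) ω - X k ω) ^ 2|ℱ k] ω ≤ σ ^ 2) :
    ∫ ω, exp (t * (X n ω - X 0 ω)) ∂μ ≤ bennettBound (σ ^ 2 / d ^ 2) (t * d) ^ n := by
  refine integral_exp_mul_sub_zero_le_pow hX.stronglyAdapted ht (by unfold bennettBound; positivity)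
    (fun k hk ↦ (hbdd k hk).mono fun ω ↦ le_of_abs_le) fun k hk ↦ ?_
  exact ae_condExp_exp_mul_le_bennettBound (ℱ.le k)
    (((hX.stronglyMeasurable (k + 1)).mono (ℱ.le _)).sub
      ((hX.stronglyMeasurable k).mono (ℱ.le k))).aestronglyMeasurable
    ht hd (hbdd k hk) (hX.condExp_succ_sub_ae_eq_zero k) (hvar k hk)

theorem measureReal_ge_le_exp_mul_bennettBound_pow (hX : Martingale X ℱ μ)
    (ht : 0 ≤ t) (hd : 0 < d) (hbdd : ∀ k < n, ∀ᵐ ω ∂μ, |X (k + 1) ω - X k ω| ≤ d)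
    (hvar : ∀ k < n, ∀ᵐ ω ∂μ, μ[fun ω ↦ (X (k + 1) ω - X k ω) ^ 2|ℱ k] ω ≤ σ ^ 2) (ε : ℝ) :
    μ.real {ω | ε ≤ X n ω - X 0 ω} ≤
      exp (-t * ε) * bennettBound (σ ^ 2 / d ^ 2) (t * d) ^ n := by
  have hint := integrable_exp_mul_sub_zero hX.stronglyAdapted ht
    (fun k hk ↦ (hbdd k hk).mono fun ω ↦ le_of_abs_le) le_rfl
  refine (measure_ge_le_exp_mul_mgf ε ht hint).trans ?_
  gcongr
  exact hX.integral_exp_mul_sub_zero_le_bennettBound_pow ht hd hbdd hvar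

theorem measureReal_ge_le_exp_neg_mul_binaryKL (hX : Martingale X ℱ μ) (hd : 0 < d)
    (hσ : 0 < σ) (hbdd : ∀ k < n, ∀ᵐ ω ∂μ, |X (k + 1) ω - X k ω| ≤ d)
    (hvar : ∀ k < n, ∀ᵐ ω ∂μ, μ[fun ω ↦ (X (k + 1) ω - X k ω) ^ 2|ℱ k] ω ≤ σ ^ 2)
    {α : ℝ} (hα : 0 ≤ α) (hδ : α / d ≤ 1) :
    μ.real {ω | α * n ≤ X n ω - X 0 ω} ≤
      exp (-(n : ℝ) * binaryKL ((α / d + σ ^ 2 / d ^ 2) / (1 + σ ^ 2 / d ^ 2))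
        ((σ ^ 2 / d ^ 2) / (1 + σ ^ 2 / d ^ 2))) := by
  refine le_exp_neg_mul_binaryKL_of_forall_le n (by positivity) (by positivity) hδ fun s hs ↦ ?_
  refine (hX.measureReal_ge_le_exp_mul_bennettBound_pow (t := s / d) (by positivity) hd hbdd hvar
    (α * n)).trans_eq ?_
  rw [div_mul_cancel₀ s hd.ne', mul_pow, ← exp_nat_mul]
  congr 2
  ring

end MeasureTheory.Martingale

end Martingale

theorem stmt_13_general {Ω : Type*} {m0 : MeasurableSpace Ω} (μ : Measure Ω)
    [IsProbabilityMeasure μ]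
    (ℱ : Filtration ℕ m0) (X : ℕ → Ω → ℝ) (hmart : Martingale X ℱ μ)
    (n : ℕ) (d σ : ℝ) (hd : 0 < d) (hσ : 0 < σ)
    (hbdd : ∀ k, 1 ≤ k → k ≤ n → ∀ᵐ ω ∂μ, |X k ω - X (k - 1) ω| ≤ d)
    (hvar : ∀ k, 1 ≤ k → k ≤ n →
      ∀ᵐ ω ∂μ, (μ[(fun ω' => (X k ω' - X (k - 1) ω') ^ 2) | ℱ (k - 1)]) ω ≤ σ ^ 2)
    (α : ℝ) (hα : 0 ≤ α) (hδ : α / d ≤ 1) :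
    (μ {ω | α * n ≤ |X n ω - X 0 ω|}).toReal ≤
      2 * Real.exp (-(n : ℝ) *
        binaryKL ((α / d + σ ^ 2 / d ^ 2) / (1 + σ ^ 2 / d ^ 2))
          ((σ ^ 2 / d ^ 2) / (1 + σ ^ 2 / d ^ 2))) := by
  have hbdd' : ∀ k < n, ∀ᵐ ω ∂μ, |X (k + 1) ω - X k ω| ≤ d := fun k hk ↦ hbdd (k + 1) (by omega) hk
  have hvar' : ∀ k < n, ∀ᵐ ω ∂μ, μ[fun ω ↦ (X (k + 1) ω - X k ω) ^ 2|ℱ k] ω ≤ σ ^ 2 :=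
    fun k hk ↦ hvar (k + 1) (by omega) hk
  have hneg : ∀ k ω, (-X) (k + 1) ω - (-X) k ω = -(X (k + 1) ω - X k ω) := fun k ω ↦ by
    simp only [Pi.neg_apply]; ring
  have hupper := hmart.measureReal_ge_le_exp_neg_mul_binaryKL hd hσ hbdd' hvar' hα hδ
  have hlower := hmart.neg.measureReal_ge_le_exp_neg_mul_binaryKL hd hσ
    (by simpa only [hneg, abs_neg] using hbdd') (by simpa only [hneg, neg_sq] using hvar') hα hδ
  have hsplit : {ω | α * n ≤ |X n ω - X 0 ω|} =
      {ω | α * n ≤ X n ω - X 0 ω} ∪ {ω | α * n ≤ (-X) n ω - (-X) 0 ω} := by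
    ext ω
    simp only [Set.mem_ofPred_eq, Set.mem_union, le_abs, Pi.neg_apply, neg_sub_neg, neg_sub]
  rw [← measureReal_def, hsplit, two_mul]
  exact (measureReal_union_le _ _).trans (add_le_add hupper hlower)

theorem stmt_13 {Ω : Type*} {m0 : MeasurableSpace Ω} (μ : Measure Ω)
    [IsProbabilityMeasure μ]
    (ℱ : Filtration ℕ m0) (X : ℕ → Ω → ℝ) (hmart : Martingale X ℱ μ)
    (n : ℕ) (hn : 0 < n) (d σ : ℝ) (hd : 0 < d) (hσ : 0 < σ)
    (hbdd : ∀ k, 1 ≤ k → k ≤ n → ∀ᵐ ω ∂μ, |X k ω - X (k - 1) ω| ≤ d)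
    (hvar : ∀ k, 1 ≤ k → k ≤ n →
      ∀ᵐ ω ∂μ, (μ[(fun ω' => (X k ω' - X (k - 1) ω') ^ 2) | ℱ (k - 1)]) ω ≤ σ ^ 2)
    (α : ℝ) (hα : 0 ≤ α) (hδ : α / d ≤ 1) :
    (μ {ω | α * n ≤ |X n ω - X 0 ω|}).toReal ≤
      2 * Real.exp (-(n : ℝ) *
        binaryKL ((α / d + σ ^ 2 / d ^ 2) / (1 + σ ^ 2 / d ^ 2))
          ((σ ^ 2 / d ^ 2) / (1 + σ ^ 2 / d ^ 2))) :=
  stmt_13_general μ ℱ X hmart n d σ hd hσ hbdd hvar α hα hδ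
end
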